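/- Let |~ be a rational inference relation on L based on ⊢. Then C(O(|~)) = |~, i.e., for all formulas α, γ ∈ L: α C(O(|~)) γ if and only if α |~ γ. -/

import Mathlib

/-- Propositional formulas over a set `V` of propositional variables,
closed under ∧, ∨, ¬, → and containing ⊤ and ⊥. -/
inductive Form (V : Type) : Type
  | var : V → Form V
  | top : Form V
  | bot : Form V
  | and : Form V → Form V → Form V
  | or : Form V → Form V → Form V
  | not : Form V → Form V
  | imp : Form V → Form V → Form V

/-- Classical boolean evaluation of a formula under a valuation. -/
def Form.eval {V : Type} (v : V → Bool) : Form V → Bool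
  | .var p => v p
  | .top => true
  | .bot => false
  | .and a b => (Form.eval v a) && (Form.eval v b)
  | .or a b => (Form.eval v a) || (Form.eval v b)
  | .not a => !(Form.eval v a)
  | .imp a b => !(Form.eval v a) || (Form.eval v b)

/-- Classical (semantic) propositional entailment. -/
def Form.Sem {V : Type} (X : Set (Form V)) (β : Form V) : Prop :=
  ∀ v : V → Bool, (∀ φ ∈ X, Form.eval v φ = true) → Form.eval v β = true

/-- An entailment relation between sets of formulas and formulas that includes
classical propositional logic, is compact, satisfies the deduction theorem,
and satisfies disjunction in premises. -/
structure Entails (V : Type) where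
  ent : Set (Form V) → Form V → Prop
  includes_classical : ∀ X β, Form.Sem X β → ent X β
  compact : ∀ X β, ent X β → ∃ Y, Y ⊆ X ∧ Y.Finite ∧ ent Y β
  deduction : ∀ X α β, ent (insert α X) β ↔ ent X (Form.imp α β)
  disj_prem : ∀ X α γ β,
    ent (insert α X) β → ent (insert γ X) β → ent (insert (Form.or α γ) X) β

/-- `R` is an inference relation based on the entailment `ent`:
Supraclassicality, Left Logical Equivalence, Right Weakening, And. -/
def IsInferenceRel {V : Type} (ent : Set (Form V) → Form V → Prop)
    (R : Form V → Form V → Prop) : Prop :=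
  (∀ α β, ent {α} β → R α β) ∧
  (∀ α β γ, ent {α} β → ent {β} α → R α γ → R β γ) ∧
  (∀ α β γ, R α β → ent ∅ (Form.imp β γ) → R α γ) ∧
  (∀ α β γ, R α β → R α γ → R α (Form.and β γ))

/-- `R` is a preferential inference relation based on `ent`:
an inference relation satisfying Cut, Cautious Monotonicity and Or. -/
def IsPreferential {V : Type} (ent : Set (Form V) → Form V → Prop)
    (R : Form V → Form V → Prop) : Prop :=
  IsInferenceRel ent R ∧
  (∀ α β γ, R α β → R (Form.and α β) γ → R α γ) ∧
  (∀ α β γ, R α β → R α γ → R (Form.and α β) γ) ∧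
  (∀ α β γ, R α γ → R β γ → R (Form.or α β) γ)

/-- `R` is a rational inference relation based on `ent`:
preferential plus Rational Monotonicity. -/
def IsRational {V : Type} (ent : Set (Form V) → Form V → Prop)
    (R : Form V → Form V → Prop) : Prop :=
  IsPreferential ent R ∧
  (∀ α β γ, ¬ R α (Form.not β) → R α γ → R (Form.and α β) γ)

/-- Consistency Preservation of `R` with respect to `ent`. -/
def ConsPres {V : Type} (ent : Set (Form V) → Form V → Prop)
    (R : Form V → Form V → Prop) : Prop :=
  ∀ α, R α Form.bot → ent {α} Form.bot

/-- A rational ordering: Transitivity, Dominance and Conjunctiveness. -/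
def IsRationalOrdering {V : Type} (ent : Set (Form V) → Form V → Prop)
    (le : Form V → Form V → Prop) : Prop :=
  (∀ α β γ, le α β → le β γ → le α γ) ∧
  (∀ α β, ent {α} β → le α β) ∧
  (∀ α β, le α (Form.and α β) ∨ le β (Form.and α β))

/-- An expectation ordering: a rational ordering whose top is exactly
the consequences of the empty set. -/
def IsExpectationOrdering {V : Type} (ent : Set (Form V) → Form V → Prop)
    (le : Form V → Form V → Prop) : Prop :=
  IsRationalOrdering ent le ∧ ∀ α, (∀ β, le β α) → ent ∅ α

/-- Strict part of an ordering. -/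
def ltOf {V : Type} (le : Form V → Form V → Prop) (α β : Form V) : Prop :=
  le α β ∧ ¬ le β α

/-- The map O from consequence relations to orderings:
`α ≤ β` iff `¬(α ∧ β) |~ ⊥` or not `¬(α ∧ β) |~ α`. -/
def Omap {V : Type} (R : Form V → Form V → Prop) (α β : Form V) : Prop :=
  R (Form.not (Form.and α β)) Form.bot ∨ ¬ R (Form.not (Form.and α β)) α

/-- The map C from orderings to consequence relations:
`α |~ γ` iff either `β ≤ ¬α` for all `β`, or there is `β` with
`α ∧ β ⊢ γ` and `¬α < β`. -/
def Cmap {V : Type} (ent : Set (Form V) → Form V → Prop)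
    (le : Form V → Form V → Prop) (α γ : Form V) : Prop :=
  (∀ β, le β (Form.not α)) ∨
  (∃ β, ent {Form.and α β} γ ∧ ltOf le (Form.not α) β)

/-- The ranked consequence operator based on `ent` induced by a family
`B` of sets of formulas: `α |~ β` iff either `α |~_i β` for some `i`
(i.e. not `B i ⊢ ¬α` and `B i ∪ {α} ⊢ β`), or `⊤ |~_i ¬α` for all `i`. -/
def rankedOp {V I : Type} (ent : Set (Form V) → Form V → Prop)
    (B : I → Set (Form V)) (α β : Form V) : Prop :=
  (∃ i, ¬ ent (B i) (Form.not α) ∧ ent (insert α (B i)) β) ∨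
  (∀ i, ¬ ent (B i) (Form.not Form.top) ∧ ent (insert Form.top (B i)) (Form.not α))

/-- The ordering induced by a ranked consequence operator:
`α ≤ β` iff for all `i`, `B i ⊢ α` implies `B i ⊢ β`. -/
def inducedOrder {V I : Type} (ent : Set (Form V) → Form V → Prop)
    (B : I → Set (Form V)) (α β : Form V) : Prop :=
  ∀ i, ent (B i) α → ent (B i) β
/-
A rational relation `|~` is recovered from `O(|~)` because the comparisons `¬α ≤ β` that matter
in `C` all go through the formula `¬(¬α ∧ β) ≡ α ∨ ¬β`. If `¬α < β` then `α ∨ ¬β |~ β` while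
`α ∨ ¬β` does not expect `¬α`, so Rational Monotonicity strengthens the premise to `α` and gives
`α |~ β`. Conversely, if `α |~ γ` with `α` consistent for `|~`, the witness `β := ¬α ∨ γ` makes
`α ∨ ¬β` equivalent to `α` itself, and `¬α < β` unfolds to `α |~ γ`. The degenerate case
`α |~ ⊥` corresponds to `¬α` lying on top of `O(|~)`, by Cut and Cautious Monotonicity.
-/

namespace Entails

variable {V : Type} (E : Entails V) {a b : Form V}

theorem ent_singleton_of_eval (h : ∀ v, a.eval v = true → b.eval v = true) : E.ent {a} b :=
  E.includes_classical _ _ fun v hv => h v (hv a rfl)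

theorem ent_empty_of_eval (h : ∀ v, b.eval v = true) : E.ent ∅ b :=
  E.includes_classical _ _ fun v _ => h v

theorem ent_empty_imp_of_ent_singleton (h : E.ent {a} b) : E.ent ∅ (Form.imp a b) :=
  (E.deduction ∅ a b).mp (by rwa [insert_empty_eq])

end Entails

namespace IsInferenceRel

variable {V : Type} {E : Entails V} {R : Form V → Form V → Prop} (hR : IsInferenceRel E.ent R)
  {a b c : Form V}
include hR

theorem of_eval (h : ∀ v, a.eval v = true → b.eval v = true) : R a b :=
  hR.1 a b (E.ent_singleton_of_eval h)

theorem refl (a : Form V) : R a a :=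
  hR.of_eval fun _ h => h

theorem congr_left (h : ∀ v, a.eval v = b.eval v) : R a c ↔ R b c := by
  have hab : E.ent {a} b := E.ent_singleton_of_eval fun v => (h v ▸ ·)
  have hba : E.ent {b} a := E.ent_singleton_of_eval fun v => ((h v).symm ▸ ·)
  exact ⟨hR.2.1 a b c hab hba, hR.2.1 b a c hba hab⟩

theorem mono (hab : R a b) (h : ∀ v, b.eval v = true → c.eval v = true) : R a c :=
  hR.2.2.1 a b c hab <| E.ent_empty_of_eval fun v => by
    cases hb : b.eval v
    · simp [Form.eval, hb]
    · simp [Form.eval, hb, h v hb]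

theorem of_bot (h : R a Form.bot) : R a c :=
  hR.mono h fun v h => by simp [Form.eval] at h

theorem and_self_left (hab : R a b) : R a (Form.and a b) :=
  hR.2.2.2 a a b (hR.refl a) hab

theorem of_ent_and (hab : R a b) (h : E.ent {Form.and a b} c) : R a c :=
  hR.2.2.1 a _ c (hR.and_self_left hab) (E.ent_empty_imp_of_ent_singleton h)

theorem bot_of_not_self (h : R a (Form.not a)) : R a Form.bot :=
  hR.mono (hR.and_self_left h) fun v h => by
    cases ha : a.eval v <;> simp [Form.eval, ha] at h

theorem not_self_or_iff : R a (Form.or (Form.not a) b) ↔ R a b :=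
  ⟨fun h => hR.mono (hR.and_self_left h) fun v h => by
      cases ha : a.eval v <;> simp_all [Form.eval],
    fun h => hR.mono h fun v h => by simp [Form.eval, h]⟩

theorem omap_iff_of_eval {d : Form V} (h : ∀ v, (Form.not (Form.and a b)).eval v = d.eval v) :
    Omap R a b ↔ R d Form.bot ∨ ¬ R d a := by
  rw [Omap, hR.congr_left h, hR.congr_left h]

theorem omap_lt_not_self_or_iff :
    ltOf (Omap R) (Form.not a) (Form.or (Form.not a) b) ↔ ¬ R a Form.bot ∧ R a b := by
  have hle := hR.omap_iff_of_eval (a := Form.not a) (b := Form.or (Form.not a) b) (d := a)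
    fun v => by simp only [Form.eval]; cases a.eval v <;> cases b.eval v <;> rfl
  have hge := hR.omap_iff_of_eval (a := Form.or (Form.not a) b) (b := Form.not a) (d := a)
    fun v => by simp only [Form.eval]; cases a.eval v <;> cases b.eval v <;> rfl
  rw [ltOf, hle, hge, hR.not_self_or_iff]
  constructor
  · rintro ⟨-, hge⟩
    push Not at hge
    exact hge
  · rintro ⟨hbot, hab⟩
    exact ⟨Or.inr fun h => hbot (hR.bot_of_not_self h), fun h => h.elim hbot (· hab)⟩

end IsInferenceRel

theorem IsPreferential.forall_omap_le_not_iff {V : Type} {E : Entails V}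
    {R : Form V → Form V → Prop} (hR : IsPreferential E.ent R) (a : Form V) :
    (∀ b, Omap R b (Form.not a)) ↔ R a Form.bot := by
  obtain ⟨hI, cut, cautiousMono, -⟩ := hR
  constructor
  · intro h
    have htop := (hI.omap_iff_of_eval (a := Form.top) (b := Form.not a) (d := a)
      fun v => by simp only [Form.eval]; cases a.eval v <;> rfl).mp (h Form.top)
    exact htop.resolve_right (not_not.mpr (hI.of_eval fun v _ => rfl))
  · intro hbot b
    refine (hI.omap_iff_of_eval (d := Form.not (Form.and b (Form.not a))) fun _ => rfl).mpr ?_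
    refine (em _).imp (fun hb => cut _ b _ hb ?_) id
    -- `(a ∨ ¬b) ∧ b` is equivalent to `a ∧ b`, and `a ∧ b |~ ⊥` by Cautious Monotonicity.
    refine (hI.congr_left fun v => ?_).mp (cautiousMono a b _ (hI.of_bot hbot) hbot)
    simp only [Form.eval]; cases a.eval v <;> cases b.eval v <;> rfl

theorem IsRational.of_omap_lt {V : Type} {E : Entails V} {R : Form V → Form V → Prop}
    (hR : IsRational E.ent R) {a b : Form V} (h : ltOf (Omap R) (Form.not a) b) : R a b := by
  obtain ⟨⟨hI, -⟩, ratMono⟩ := hR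
  set d := Form.not (Form.and b (Form.not a))
  have hd : ∀ v, (Form.not (Form.and (Form.not a) b)).eval v = d.eval v := fun v => by
    simp only [d, Form.eval]; cases a.eval v <;> cases b.eval v <;> rfl
  obtain ⟨hle, hnge⟩ := h
  rw [hI.omap_iff_of_eval hd] at hle
  rw [hI.omap_iff_of_eval fun _ => rfl] at hnge
  push Not at hnge
  have hd_not : ¬ R d (Form.not a) := hle.resolve_left hnge.1
  refine (hI.congr_left fun v => ?_).mp (ratMono d a b hd_not hnge.2)
  simp only [d, Form.eval]; cases a.eval v <;> cases b.eval v <;> rfl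

/-- `C(O(|~)) = |~` for a rational inference relation. -/
theorem stmt_11 {V : Type} (E : Entails V) (R : Form V → Form V → Prop)
    (hR : IsRational E.ent R) :
    ∀ α γ, Cmap E.ent (Omap R) α γ ↔ R α γ := by
  have hI := hR.1.1
  intro α γ
  constructor
  · rintro (htop | ⟨β, hent, hlt⟩)
    · exact hI.of_bot ((hR.1.forall_omap_le_not_iff α).mp htop)
    · exact hI.of_ent_and (hR.of_omap_lt hlt) hent
  · intro h
    by_cases hbot : R α Form.bot
    · exact Or.inl ((hR.1.forall_omap_le_not_iff α).mpr hbot)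
    · refine Or.inr ⟨Form.or (Form.not α) γ, E.ent_singleton_of_eval fun v hv => ?_,
        hI.omap_lt_not_self_or_iff.mpr ⟨hbot, h⟩⟩
      cases hα : α.eval v <;> simp_all [Form.eval]
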